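/- arXiv:2504.02376 — 3 statements merged into one kernel-verified Lean document; each statement's English description precedes it below -/
import Mathlib

section
/- For every i ≥ 0 and every state s with s_N ≥ 1, the value-iteration iterates satisfy V_i(s) = V_i(R(s)), where R(s) is the state obtained from s by deleting all clusters i with η(i) = 0 (keeping the remaining clusters in their original order). -/
open scoped BigOperators

/-- A state of the reservation process: `s.1 + 1` clusters (so at least one),
with the number of active terminals in each cluster given by `s.2`. -/
abbrev RState : Type := Σ m : ℕ, (Fin (m + 1) → ℕ)

/-- `sN s` is the total number of active terminals in state `s`. -/
def sN (s : RState) : ℕ := ∑ j, s.2 j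

/-- An action assigns a transmission probability to each cluster; we record it as a
function on `ℕ` and require it to take values in `[0,1]` on the first `M` coordinates. -/
def IsActionOn (M : ℕ) (p : ℕ → ℝ) : Prop := ∀ j < M, 0 ≤ p j ∧ p j ≤ 1

/-- The splitting weight `w(η, η', p)`: the probability that in each cluster `i` exactly
`η' i` of the `η i` terminals do not transmit, each terminal of cluster `i`
transmitting independently with probability `p i`. -/
noncomputable def w {M : ℕ} (η η' : Fin M → ℕ) (p : ℕ → ℝ) : ℝ :=
  ∏ i, (Nat.choose (η i) (η' i) : ℝ) * (1 - p i.val) ^ (η' i) * (p i.val) ^ (η i - η' i)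

/-- The possible outcomes at state `s`: a choice, for each cluster, of how many
terminals do not transmit (at most the cluster size). -/
abbrev Outcome (s : RState) : Type := ∀ j : Fin (s.1 + 1), Fin (s.2 j + 1)

/-- The cluster configuration `η'` of non-transmitters determined by an outcome. -/
def outEta {s : RState} (f : Outcome s) : Fin (s.1 + 1) → ℕ := fun j => (f j : ℕ)

/-- The next state resulting from state `s` when `η' j` terminals of cluster `j` kept
silent: idle (no transmitter) and success (one transmitter) keep the clusters, while a
collision (at least two transmitters) moves all colliding terminals to a new cluster. -/
def step (s : RState) (η' : Fin (s.1 + 1) → ℕ) : RState :=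
  if (∑ j, (s.2 j - η' j)) ≤ 1 then ⟨s.1, η'⟩
  else ⟨s.1 + 1, Fin.snoc η' (∑ j, (s.2 j - η' j))⟩

/-- Transition probability `P(s' | s, p)` of the reservation process. -/
noncomputable def transP (s : RState) (p : ℕ → ℝ) (s' : RState) : ℝ :=
  ∑ f : Outcome s, if step s (outEta f) = s' then w s.2 (outEta f) p else 0

/-- The value-iteration iterates `V_i` of the genie-aided Goal-MDP:
`V_0 = 0`; target states (no active terminals) have value `0`; otherwise
`V_{i+1}(s)` is the infimum over actions of `1 + ∑_{s'} P(s' | s, p) V_i(s')`. -/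
noncomputable def Vit : ℕ → RState → ℝ
  | 0, _ => 0
  | i + 1, s =>
    if sN s = 0 then 0
    else sInf { x : ℝ | ∃ p : ℕ → ℝ, IsActionOn (s.1 + 1) p ∧
      x = 1 + ∑ f : Outcome s, w s.2 (outEta f) p * Vit i (step s (outEta f)) }

/-- The state obtained from a list of cluster sizes (a nonempty list `l` yields the
state with `l.length` clusters whose sizes are the entries of `l`, in order). -/
def ofList (l : List ℕ) : RState := ⟨l.length - 1, fun i => l.getD i.val 0⟩

/-- `removeZeros s` is the state `R(s)` obtained from `s` by deleting all clusters
containing zero terminals, keeping the remaining clusters in their original order. -/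
def removeZeros (s : RState) : RState := ofList ((List.ofFn s.2).filter (fun n => n ≠ 0))

/-!
Empty clusters are invisible to the process: their terminals never transmit, so they contribute
a factor `1` to every splitting weight, admit a single outcome, and are carried along unchanged
by every transition. Hence if `s` arises from `t` by inserting empty clusters, matching outcomes
and actions cluster by cluster identifies the Bellman updates at `s` and at `t`, and by induction
on `i` the iterates agree. `R(s)` is reached from `s` by deleting empty clusters one at a time.
-/

open Function

noncomputable def qValue (i : ℕ) (s : RState) (p : ℕ → ℝ) : ℝ :=
  1 + ∑ f : Outcome s, w s.2 (outEta f) p * Vit i (step s (outEta f))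

theorem Vit_succ_of_sN_ne_zero {s : RState} (i : ℕ) (h : sN s ≠ 0) :
    Vit (i + 1) s = sInf {x | ∃ p, IsActionOn (s.1 + 1) p ∧ x = qValue i s p} := by
  rw [Vit, if_neg h]
  rfl

theorem isActionOn_extend {α : Type*} (f : α → ℕ) {g : α → ℝ} (hg : ∀ a, 0 ≤ g a ∧ g a ≤ 1)
    (M : ℕ) : IsActionOn M (extend f g 0) := by
  classical
  intro n _
  rw [extend_def]
  split
  exacts [hg _, ⟨le_rfl, zero_le_one⟩]

/-- `s` is `t` with empty clusters inserted: the clusters of `t` sit in `s` via `toFun`. -/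
structure ZeroPadding (t s : RState) where
  toFun : Fin (t.1 + 1) → Fin (s.1 + 1)
  injective : Injective toFun
  eta_apply : ∀ j, t.2 j = s.2 (toFun j)
  eta_eq_zero : ∀ b ∉ Set.range toFun, s.2 b = 0

namespace ZeroPadding

variable {s t : RState}

theorem sN_eq (e : ZeroPadding t s) : sN t = sN s :=
  Fintype.sum_of_injective e.toFun e.injective _ _ e.eta_eq_zero e.eta_apply

theorem outcome_eq_zero (e : ZeroPadding t s) (f : Outcome s) {b} (hb : b ∉ Set.range e.toFun) :
    (f b : ℕ) = 0 := by
  have := (f b).isLt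
  have := e.eta_eq_zero b hb
  omega

def restrict (e : ZeroPadding t s) (f : Outcome s) : Outcome t :=
  fun j => Fin.cast (by rw [e.eta_apply]) (f (e.toFun j))

theorem restrict_bijective (e : ZeroPadding t s) : Bijective e.restrict := by
  classical
  constructor
  · intro f f' h
    funext b
    by_cases hb : b ∈ Set.range e.toFun
    · obtain ⟨a, rfl⟩ := hb
      exact Fin.ext (by simpa [restrict] using congrArg Fin.val (congrFun h a))
    · exact Fin.ext (by rw [e.outcome_eq_zero f hb, e.outcome_eq_zero f' hb])
  · intro g
    refine ⟨fun b => if h : ∃ a, e.toFun a = b then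
        Fin.cast (by rw [e.eta_apply, h.choose_spec]) (g h.choose)
      else ⟨0, Nat.succ_pos _⟩, ?_⟩
    funext j
    have hj : ∃ a, e.toFun a = e.toFun j := ⟨j, rfl⟩
    apply Fin.ext
    simp only [restrict, Fin.val_cast, dif_pos hj]
    rw [e.injective hj.choose_spec]

theorem transmitters_eq (e : ZeroPadding t s) (f : Outcome s) :
    ∑ j, (t.2 j - outEta (e.restrict f) j) = ∑ b, (s.2 b - outEta f b) :=
  Fintype.sum_of_injective e.toFun e.injective _ _
    (fun b hb => by simp [outEta, e.eta_eq_zero b hb])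
    (fun j => by simp [outEta, restrict, e.eta_apply])

def ofOutEta (e : ZeroPadding t s) (f : Outcome s) :
    ZeroPadding ⟨t.1, outEta (e.restrict f)⟩ ⟨s.1, outEta f⟩ where
  toFun := e.toFun
  injective := e.injective
  eta_apply _ := rfl
  eta_eq_zero _ hb := e.outcome_eq_zero f hb

def snoc (e : ZeroPadding t s) (c : ℕ) :
    ZeroPadding ⟨t.1 + 1, Fin.snoc t.2 c⟩ ⟨s.1 + 1, Fin.snoc s.2 c⟩ where
  toFun := Fin.snoc (Fin.castSucc ∘ e.toFun) (Fin.last _)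
  injective := Fin.snoc_injective_of_injective ((Fin.castSucc_injective _).comp e.injective)
    (by simp [Fin.castSucc_ne_last])
  eta_apply j := by
    induction j using Fin.lastCases with
    | last => simp
    | cast j => simp [e.eta_apply]
  eta_eq_zero b hb := by
    induction b using Fin.lastCases with
    | last => exact absurd ⟨Fin.last _, by simp⟩ hb
    | cast b =>
      show (Fin.snoc s.2 c : Fin (s.1 + 2) → ℕ) b.castSucc = 0
      rw [Fin.snoc_castSucc]
      exact e.eta_eq_zero b fun ⟨a, ha⟩ => hb ⟨a.castSucc, by simp [ha]⟩

def ofStep (e : ZeroPadding t s) (f : Outcome s) :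
    ZeroPadding (step t (outEta (e.restrict f))) (step s (outEta f)) := by
  unfold _root_.step
  rw [e.transmitters_eq]
  split
  exacts [e.ofOutEta f, (e.ofOutEta f).snoc _]

theorem w_eq (e : ZeroPadding t s) {p q : ℕ → ℝ} (hpq : ∀ j : Fin (t.1 + 1), q j = p (e.toFun j))
    (f : Outcome s) :
    w t.2 (outEta (e.restrict f)) q = w s.2 (outEta f) p :=
  Fintype.prod_of_injective e.toFun e.injective _ _
    (fun b hb => by simp [_root_.outEta, e.eta_eq_zero b hb, e.outcome_eq_zero f hb])
    (fun j => by simp [_root_.outEta, restrict, e.eta_apply, hpq])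

theorem qValue_eq (e : ZeroPadding t s) {i : ℕ}
    (hV : ∀ f, Vit i (step t (outEta (e.restrict f))) = Vit i (step s (outEta f)))
    {p q : ℕ → ℝ} (hpq : ∀ j : Fin (t.1 + 1), q j = p (e.toFun j)) :
    qValue i s p = qValue i t q := by
  unfold qValue
  congr 1
  exact Fintype.sum_bijective _ e.restrict_bijective _ _ fun f => by rw [e.w_eq hpq, hV]

theorem Vit_eq (i : ℕ) : ∀ {s t : RState}, ZeroPadding t s → Vit i t = Vit i s := by
  induction i with
  | zero => intro _ _ _; rfl
  | succ i IH =>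
    intro s t e
    by_cases h : sN s = 0
    · simp [Vit, h, e.sN_eq]
    have hV f := IH (e.ofStep f)
    rw [Vit_succ_of_sN_ne_zero i (e.sN_eq ▸ h), Vit_succ_of_sN_ne_zero i h]
    congr 1
    ext x
    constructor
    · rintro ⟨q, hq, rfl⟩
      refine ⟨extend (fun j => (e.toFun j : ℕ)) (fun j : Fin (t.1 + 1) => q j) 0,
        isActionOn_extend _ (fun j : Fin (t.1 + 1) => hq j j.isLt) _,
        (e.qValue_eq hV fun j => ?_).symm⟩
      exact ((Fin.val_injective.comp e.injective).extend_apply (fun j => q j) 0 j).symm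
    · rintro ⟨p, hp, rfl⟩
      refine ⟨extend Fin.val (fun j : Fin (t.1 + 1) => p (e.toFun j)) 0,
        isActionOn_extend _ (fun j => hp _ (e.toFun j).isLt) _, e.qValue_eq hV fun j => ?_⟩
      exact Fin.val_injective.extend_apply _ _ j

def succAbove {m : ℕ} (η : Fin (m + 2) → ℕ) {k : Fin (m + 2)} (hk : η k = 0) :
    ZeroPadding ⟨m, η ∘ k.succAbove⟩ ⟨m + 1, η⟩ where
  toFun := k.succAbove
  injective := Fin.succAbove_right_injective
  eta_apply _ := rfl
  eta_eq_zero b hb := by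
    rw [Fin.range_succAbove, Set.mem_compl_iff, not_not, Set.mem_singleton_iff] at hb
    rwa [hb]

end ZeroPadding

theorem List.ofFn_comp_succAbove {α : Type*} {n : ℕ} (f : Fin (n + 1) → α) (k : Fin (n + 1)) :
    List.ofFn (f ∘ k.succAbove) = (List.ofFn f).eraseIdx k := by
  have hk : (k : ℕ) < (List.ofFn f).length := by rw [List.length_ofFn]; exact k.isLt
  apply List.ext_getElem
  · rw [List.length_eraseIdx_of_lt hk, List.length_ofFn, List.length_ofFn, Nat.add_sub_cancel]
  · intro i h _
    rw [List.getElem_eraseIdx]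
    simp only [List.getElem_ofFn, Function.comp_apply]
    rw [List.length_ofFn] at h
    split <;> congr 1 <;> ext <;> simp [Fin.succAbove, Fin.lt_def, *]

theorem List.filter_eraseIdx_of_not {α : Type*} (p : α → Bool) {l : List α} {k : ℕ}
    (hk : k < l.length) (h : p l[k] = false) : (l.eraseIdx k).filter p = l.filter p := by
  conv_rhs => rw [← List.take_append_drop k l, List.drop_eq_getElem_cons hk]
  rw [List.eraseIdx_eq_take_drop_succ, List.filter_append, List.filter_append,
    List.filter_cons_of_neg (by simp [h])]

theorem ofList_ofFn {m : ℕ} (η : Fin (m + 1) → ℕ) : ofList (List.ofFn η) = ⟨m, η⟩ := by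
  have hl : (List.ofFn η).length = m + 1 := List.length_ofFn
  refine Sigma.ext (by simp only [ofList, hl, Nat.add_sub_cancel])
    ((Fin.heq_fun_iff (by simp only [ofList, hl, Nat.add_sub_cancel])).mpr fun i => ?_)
  simp only [ofList]
  rw [List.getD_eq_getElem _ _ (by omega), List.getElem_ofFn]

theorem removeZeros_of_forall_ne_zero {m : ℕ} (η : Fin (m + 1) → ℕ) (h : ∀ b, η b ≠ 0) :
    removeZeros ⟨m, η⟩ = ⟨m, η⟩ := by
  rw [removeZeros, List.filter_eq_self.mpr, ofList_ofFn]
  intro a ha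
  obtain ⟨b, rfl⟩ := List.mem_ofFn.mp ha
  simpa using h b

theorem removeZeros_zero (η : Fin 1 → ℕ) : removeZeros ⟨0, η⟩ = ⟨0, η⟩ := by
  by_cases h : η 0 = 0
  · have : η = 0 := funext fun b => by rwa [Fin.fin_one_eq_zero b]
    subst this
    -- `ofList []` is the one-cluster empty state `⟨0, 0⟩`
    rfl
  · exact removeZeros_of_forall_ne_zero η fun b => by rwa [Fin.fin_one_eq_zero b]

theorem removeZeros_comp_succAbove {m : ℕ} (η : Fin (m + 2) → ℕ) {k : Fin (m + 2)}
    (hk : η k = 0) : removeZeros ⟨m, η ∘ k.succAbove⟩ = removeZeros ⟨m + 1, η⟩ := by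
  unfold removeZeros
  dsimp only
  rw [List.ofFn_comp_succAbove,
    List.filter_eraseIdx_of_not _ (by simp only [List.length_ofFn, k.isLt])
      (by simp only [List.getElem_ofFn, hk]; rfl)]

theorem valueIteration_removeZeros_general (i : ℕ) (s : RState) :
    Vit i s = Vit i (removeZeros s) := by
  obtain ⟨m, η⟩ := s
  induction m with
  | zero => rw [removeZeros_zero]
  | succ m ih =>
    by_cases hzero : ∃ k, η k = 0
    · obtain ⟨k, hk⟩ := hzero
      rw [← removeZeros_comp_succAbove η hk, ← ih]
      exact ((ZeroPadding.succAbove η hk).Vit_eq i).symm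
    · simp only [not_exists] at hzero
      rw [removeZeros_of_forall_ne_zero η hzero]

/-- **Lemma 1.** For every `i ≥ 0` and every state `s` with `s_N ≥ 1`, the
value-iteration iterates satisfy `V_i(s) = V_i(R(s))`. -/
theorem valueIteration_removeZeros (i : ℕ) (s : RState) (hN : 1 ≤ sN s) :
    Vit i s = Vit i (removeZeros s) :=
  valueIteration_removeZeros_general i s
end

section
/- For every i ≥ 0, every state s = (M, η), and every permutation σ of {1,…,M}, the value-iteration iterates satisfy V_i((M, η ∘ σ)) = V_i((M, η)); i.e., V_i is invariant under permuting the clusters of a state. -/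
open scoped BigOperators

/-! By induction on `i`. Relabelling the clusters by `σ` transports actions
(`p ↦ p ∘ σ`), outcomes and splitting weights, and sends each successor state to a
relabelled successor; a collision's new cluster is appended last, so there the relabelling
is `σ` extended by fixing the last cluster. By the induction hypothesis the successors then
have equal values, so both states have the same set of Bellman values and hence the same
infimum. -/

noncomputable def bellman (V : RState → ℝ) (s : RState) (p : ℕ → ℝ) : ℝ :=
  1 + ∑ f : Outcome s, w s.2 (outEta f) p * V (step s (outEta f))

def bellmanValues (V : RState → ℝ) (s : RState) : Set ℝ :=
  {x | ∃ p, IsActionOn (s.1 + 1) p ∧ x = bellman V s p}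

theorem Vit_succ (i : ℕ) (s : RState) :
    Vit (i + 1) s = if sN s = 0 then 0 else sInf (bellmanValues (Vit i) s) := by
  rw [Vit]; rfl

def IsPermInvariant {α : Type*} (V : RState → α) : Prop :=
  ∀ (m : ℕ) (η : Fin (m + 1) → ℕ) (σ : Equiv.Perm (Fin (m + 1))),
    V ⟨m, η ∘ σ⟩ = V ⟨m, η⟩

/-- `σ` acting on the first `n` points of `Fin (n + 1)`, fixing the last one. -/
def Equiv.Perm.extendLast {n : ℕ} (σ : Equiv.Perm (Fin n)) : Equiv.Perm (Fin (n + 1)) :=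
  finSuccEquivLast.symm.permCongr σ.optionCongr

theorem Fin.snoc_comp_extendLast {n : ℕ} (σ : Equiv.Perm (Fin n)) (ν : Fin n → ℕ)
    (c : ℕ) :
    (Fin.snoc ν c : Fin (n + 1) → ℕ) ∘ σ.extendLast = Fin.snoc (ν ∘ σ) c := by
  funext j
  induction j using Fin.lastCases <;> simp [Equiv.Perm.extendLast, Equiv.permCongr_apply]

theorem sN_comp_perm {m : ℕ} (η : Fin (m + 1) → ℕ) (σ : Equiv.Perm (Fin (m + 1))) :
    sN ⟨m, η ∘ σ⟩ = sN ⟨m, η⟩ :=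
  Equiv.sum_comp σ η

theorem IsPermInvariant.step_comp_perm {α : Type*} {V : RState → α} (hV : IsPermInvariant V)
    {m : ℕ} (η η' : Fin (m + 1) → ℕ) (σ : Equiv.Perm (Fin (m + 1))) :
    V (step ⟨m, η ∘ σ⟩ (η' ∘ σ)) = V (step ⟨m, η⟩ η') := by
  have hcount : ∑ j, ((η ∘ σ) j - (η' ∘ σ) j) = ∑ j, (η j - η' j) :=
    Equiv.sum_comp σ fun j => η j - η' j
  simp only [step, hcount]
  split_ifs
  · exact hV m η' σ
  · rw [← Fin.snoc_comp_extendLast]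
    exact hV (m + 1) _ σ.extendLast

noncomputable def permAction {M : ℕ} (σ : Equiv.Perm (Fin M)) (p : ℕ → ℝ) : ℕ → ℝ :=
  fun n => if h : n < M then p (σ ⟨n, h⟩) else 0

theorem permAction_val {M : ℕ} (σ : Equiv.Perm (Fin M)) (p : ℕ → ℝ) (j : Fin M) :
    permAction σ p j = p (σ j) :=
  dif_pos j.isLt

theorem IsActionOn.permAction {M : ℕ} {p : ℕ → ℝ} (hp : IsActionOn M p)
    (σ : Equiv.Perm (Fin M)) :
    IsActionOn M (permAction σ p) := fun j hj => by
  simpa only [← permAction_val σ p ⟨j, hj⟩] using hp _ (σ ⟨j, hj⟩).isLt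

theorem w_comp_perm {M : ℕ} (η η' : Fin M → ℕ) (σ : Equiv.Perm (Fin M)) (p : ℕ → ℝ) :
    w (η ∘ σ) (η' ∘ σ) (permAction σ p) = w η η' p := by
  simp only [w, Function.comp_apply, permAction_val]
  exact Equiv.prod_comp σ fun i => (η i).choose (η' i) * (1 - p i) ^ η' i * p i ^ (η i - η' i)

theorem IsPermInvariant.bellman_comp_perm {V : RState → ℝ} (hV : IsPermInvariant V)
    {m : ℕ} (η : Fin (m + 1) → ℕ) (σ : Equiv.Perm (Fin (m + 1))) (p : ℕ → ℝ) :
    bellman V ⟨m, η ∘ σ⟩ (permAction σ p) = bellman V ⟨m, η⟩ p := by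
  let e : Outcome ⟨m, η⟩ ≃ Outcome ⟨m, η ∘ σ⟩ :=
    (Equiv.piCongrLeft (fun j => Fin (η j + 1)) σ).symm
  have he (g : Outcome ⟨m, η⟩) : outEta (e g) = outEta g ∘ σ := rfl
  rw [bellman, bellman, ← e.sum_comp]
  simp only [he, w_comp_perm, hV.step_comp_perm]

theorem IsPermInvariant.bellmanValues_comp_perm_subset {V : RState → ℝ}
    (hV : IsPermInvariant V)
    {m : ℕ} (η : Fin (m + 1) → ℕ) (σ : Equiv.Perm (Fin (m + 1))) :
    bellmanValues V ⟨m, η⟩ ⊆ bellmanValues V ⟨m, η ∘ σ⟩ := by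
  rintro _ ⟨p, hp, rfl⟩
  exact ⟨permAction σ p, hp.permAction σ, (hV.bellman_comp_perm η σ p).symm⟩

theorem IsPermInvariant.bellmanValues_comp_perm {V : RState → ℝ} (hV : IsPermInvariant V)
    {m : ℕ} (η : Fin (m + 1) → ℕ) (σ : Equiv.Perm (Fin (m + 1))) :
    bellmanValues V ⟨m, η ∘ σ⟩ = bellmanValues V ⟨m, η⟩ := by
  refine (hV.bellmanValues_comp_perm_subset η σ).antisymm' ?_
  simpa [Function.comp_assoc] using hV.bellmanValues_comp_perm_subset (η ∘ σ) σ⁻¹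

theorem isPermInvariant_Vit (i : ℕ) : IsPermInvariant (Vit i) := by
  induction i with
  | zero => exact fun _ _ _ => rfl
  | succ i ih =>
    intro m η σ
    rw [Vit_succ, Vit_succ, sN_comp_perm, ih.bellmanValues_comp_perm]

/-- **Lemma 2.** For every `i ≥ 0`, every state `s = (M, η)` and every permutation `σ`
of the clusters, the value-iteration iterates satisfy `V_i((M, η ∘ σ)) = V_i((M, η))`:
`V_i` is invariant under permuting the clusters of a state. -/
theorem valueIteration_perm (i : ℕ) (m : ℕ) (η : Fin (m + 1) → ℕ)
    (σ : Equiv.Perm (Fin (m + 1))) :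
    Vit i ⟨m, η ∘ σ⟩ = Vit i ⟨m, η⟩ :=
  isPermInvariant_Vit i m η σ
end

section
/- For every i ≥ 0 and every state s, the value-iteration iterates satisfy V_i(s) ≥ min(i, s_N). In particular, the limiting value function is bounded below by the number of active terminals s_N. -/
open scoped BigOperators

/-!
Under any action the splitting weights form a probability distribution over the outcomes,
and every outcome removes at most one active terminal: a success removes one, while a
collision only moves the colliding terminals into a new cluster. Hence by induction
`V_{i+1}(s) ≥ 1 + min(i, s_N - 1) = min(i + 1, s_N)`.
-/

open Finset Filter Topology

lemma w_nonneg {M : ℕ} (η η' : Fin M → ℕ) {p : ℕ → ℝ} (hp : IsActionOn M p) :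
    0 ≤ w η η' p :=
  prod_nonneg fun i _ => by
    obtain ⟨hp₀, hp₁⟩ := hp i i.isLt
    have : 0 ≤ 1 - p i := sub_nonneg.2 hp₁
    positivity

lemma sum_choose_mul_one_sub_pow_mul_pow (n : ℕ) (q : ℝ) :
    ∑ k : Fin (n + 1), (n.choose k : ℝ) * (1 - q) ^ (k : ℕ) * q ^ (n - k) = 1 := by
  rw [Fin.sum_univ_eq_sum_range (fun k => (n.choose k : ℝ) * (1 - q) ^ k * q ^ (n - k))]
  calc ∑ k ∈ range (n + 1), (n.choose k : ℝ) * (1 - q) ^ k * q ^ (n - k)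
      = (1 - q + q) ^ n := by rw [add_pow]; exact sum_congr rfl fun k _ => by ring
    _ = 1 := by rw [sub_add_cancel, one_pow]

lemma sum_w_eq_one {M : ℕ} (η : Fin M → ℕ) (p : ℕ → ℝ) :
    ∑ f : (∀ j, Fin (η j + 1)), w η (fun j => f j) p = 1 :=
  calc ∑ f : (∀ j, Fin (η j + 1)), w η (fun j => f j) p
      = ∏ j, ∑ k : Fin (η j + 1),
          ((η j).choose k : ℝ) * (1 - p j) ^ (k : ℕ) * p j ^ (η j - k) := by
        rw [Fintype.prod_sum]; rfl
    _ = 1 := prod_eq_one fun j _ => sum_choose_mul_one_sub_pow_mul_pow (η j) (p j)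

lemma le_sum_w_mul {s : RState} {p : ℕ → ℝ} (hp : IsActionOn (s.1 + 1) p) {c : ℝ}
    {g : Outcome s → ℝ} (hg : ∀ f, c ≤ g f) :
    c ≤ ∑ f : Outcome s, w s.2 (outEta f) p * g f :=
  calc c = ∑ f : Outcome s, w s.2 (outEta f) p * c := by
        rw [← sum_mul, show ∑ f : Outcome s, w s.2 (outEta f) p = 1 from sum_w_eq_one s.2 p,
          one_mul]
    _ ≤ _ := sum_le_sum fun f _ => mul_le_mul_of_nonneg_left (hg f) (w_nonneg _ _ hp)

lemma sN_le_sN_step_add_one (s : RState) (η' : Fin (s.1 + 1) → ℕ) :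
    sN s ≤ sN (step s η') + 1 := by
  unfold step
  set t := ∑ j, (s.2 j - η' j)
  have hsplit : sN s ≤ ∑ j, η' j + t :=
    (sum_le_sum fun j _ => le_add_tsub).trans_eq sum_add_distrib
  split_ifs with ht
  · change sN s ≤ ∑ j, η' j + 1
    omega
  · have hcoll : sN ⟨s.1 + 1, Fin.snoc η' t⟩ = ∑ j, η' j + t := by
      simp [sN, Fin.sum_univ_castSucc]
    omega

lemma add_le_Vit_succ {i : ℕ} {s : RState} (hs : sN s ≠ 0) {c : ℝ}
    (h : ∀ p, IsActionOn (s.1 + 1) p →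
      c ≤ ∑ f : Outcome s, w s.2 (outEta f) p * Vit i (step s (outEta f))) :
    1 + c ≤ Vit (i + 1) s := by
  rw [Vit, if_neg hs]
  refine le_csInf ⟨_, fun _ => 0, fun _ _ => ⟨le_rfl, zero_le_one⟩, rfl⟩ ?_
  rintro x ⟨p, hp, rfl⟩
  linarith [h p hp]

theorem min_le_Vit (i : ℕ) (s : RState) : min (i : ℝ) (sN s) ≤ Vit i s := by
  induction i generalizing s with
  | zero => simp [Vit]
  | succ i ih =>
    by_cases hs : sN s = 0
    · simp [Vit, hs]
    have hstep (f : Outcome s) : min (i : ℝ) (sN s - 1) ≤ Vit i (step s (outEta f)) := by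
      have : (sN s : ℝ) ≤ sN (step s (outEta f)) + 1 := by
        exact_mod_cast sN_le_sN_step_add_one s (outEta f)
      exact (min_le_min_left _ (by linarith)).trans (ih _)
    calc min ((i + 1 : ℕ) : ℝ) (sN s) = 1 + min (i : ℝ) (sN s - 1) := by
          rw [← min_add_add_left]; push_cast; ring_nf
      _ ≤ Vit (i + 1) s := add_le_Vit_succ hs fun _ hp => le_sum_w_mul hp hstep

theorem sN_le_of_tendsto_Vit {s : RState} {L : ℝ}
    (h : Tendsto (fun i => Vit i s) atTop (𝓝 L)) : (sN s : ℝ) ≤ L :=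
  ge_of_tendsto h <| eventually_atTop.2 ⟨sN s, fun i hi => by
    simpa [min_eq_right (Nat.cast_le.2 hi : (sN s : ℝ) ≤ i)] using min_le_Vit i s⟩

/-- For every `i ≥ 0` and every state `s`, the value-iteration iterates satisfy
`V_i(s) ≥ min(i, s_N)`; in particular, any limiting value function is bounded below
by the number of active terminals `s_N`. -/
theorem valueIteration_lowerBound :
    (∀ (i : ℕ) (s : RState), min (i : ℝ) (sN s : ℝ) ≤ Vit i s) ∧
    (∀ (s : RState) (L : ℝ),
      Filter.Tendsto (fun i => Vit i s) Filter.atTop (nhds L) → (sN s : ℝ) ≤ L) :=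
  ⟨min_le_Vit, fun _ _ => sN_le_of_tendsto_Vit⟩
end
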